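/- arXiv:2412.09077 — 8 statements merged into one kernel-verified Lean document; each statement's English description precedes it below -/
import Mathlib

section
/- Let f : H → ℝ be a differentiable convex function on a real Hilbert space with minimizer x*, and let (X(t), Z(t)) solve the ODE system Z = b_t Ẋ + c_t ∇f(X) + X, Ż = -a_t ∇f(X) with positive coefficient functions a_t, b_t, c_t. If A_t := a_t b_t satisfies 0 ≤ Ȧ_t ≤ a_t, then the Lyapunov function E(t) = A_t (f(X(t)) − f(x*)) + (1/2)‖Z(t) − x*‖² is non-increasing in t. -/
open Set

open scoped RealInnerProductSpace

/-!
Along the flow, `Ė = Ȧ (f(X) - f x*) + A ⟪∇f(X), Ẋ⟫ - a ⟪Z - x*, ∇f(X)⟫`. Substituting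
`Z - x* = b Ẋ + c ∇f(X) + (X - x*)`, the terms in `⟪∇f(X), Ẋ⟫` cancel because `A = a b`, leaving
`Ė = Ȧ (f(X) - f x*) - a c ‖∇f(X)‖² - a ⟪∇f(X), X - x*⟫`. The first-order convexity inequality
`f(X) - f x* ≤ ⟪∇f(X), X - x*⟫` then gives `Ė ≤ (Ȧ - a)(f(X) - f x*) ≤ 0`.
-/

theorem ConvexOn.add_fderiv_sub_le {E : Type*} [NormedAddCommGroup E] [NormedSpace ℝ E]
    {s : Set E} {f : E → ℝ} {f' : E →L[ℝ] ℝ} {x y : E}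
    (hf : ConvexOn ℝ s f) (hx : x ∈ s) (hy : y ∈ s) (hderiv : HasFDerivAt f f' x) :
    f x + f' (y - x) ≤ f y := by
  let ℓ : ℝ →ᵃ[ℝ] E := AffineMap.lineMap x y
  have h0 : (0 : ℝ) ∈ ℓ ⁻¹' s := by simpa [ℓ] using hx
  have h1 : (1 : ℝ) ∈ ℓ ⁻¹' s := by simpa [ℓ] using hy
  have hℓ : HasDerivAt (f ∘ ℓ) (f' (y - x)) 0 :=
    hderiv.comp_hasDerivAt_of_eq 0 AffineMap.hasDerivAt_lineMap (by simp [ℓ])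
  have hslope := (hf.comp_affineMap ℓ).le_slope_of_hasDerivWithinAt h0 h1 one_pos
    hℓ.hasDerivWithinAt
  simp only [slope_def_field, Function.comp_apply, ℓ, AffineMap.lineMap_apply_one,
    AffineMap.lineMap_apply_zero, sub_zero, div_one] at hslope
  linarith

section Lyapunov

variable {H : Type*} [NormedAddCommGroup H] [InnerProductSpace ℝ H]

theorem ConvexOn.add_inner_sub_le_of_hasGradientAt [CompleteSpace H] {s : Set H} {f : H → ℝ}
    {g x y : H} (hf : ConvexOn ℝ s f) (hx : x ∈ s) (hy : y ∈ s) (hgrad : HasGradientAt f g x) :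
    f x + ⟪g, y - x⟫ ≤ f y := by
  simpa using hf.add_fderiv_sub_le hx hy hgrad.hasFDerivAt

noncomputable def lyapunovEnergy (f : H → ℝ) (xs : H) (A : ℝ → ℝ) (X Z : ℝ → H) (t : ℝ) : ℝ :=
  A t * (f (X t) - f xs) + 1 / 2 * ‖Z t - xs‖ ^ 2

theorem hasDerivAt_lyapunovEnergy [CompleteSpace H] {f : H → ℝ} {g : H} (xs : H)
    {A : ℝ → ℝ} {X Z : ℝ → H} {A' : ℝ} {X' Z' : H} {t : ℝ}
    (hA : HasDerivAt A A' t) (hX : HasDerivAt X X' t) (hZ : HasDerivAt Z Z' t)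
    (hgrad : HasGradientAt f g (X t)) :
    HasDerivAt (lyapunovEnergy f xs A X Z)
      (A' * (f (X t) - f xs) + A t * ⟪g, X'⟫ + ⟪Z t - xs, Z'⟫) t := by
  have hfX : HasDerivAt (fun s => f (X s)) ⟪g, X'⟫ t := by
    have h := hgrad.hasFDerivAt.comp_hasDerivAt t hX
    rwa [InnerProductSpace.toDual_apply_apply] at h
  exact ((hA.mul (hfX.sub_const (f xs))).add
    (((hZ.sub_const xs).norm_sq).const_mul (1 / 2))).congr_deriv (by ring)

theorem lyapunovEnergy_deriv_nonpos {a b c A' δ : ℝ} {g v x z xs : H}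
    (ha : 0 ≤ a) (hc : 0 ≤ c) (hA' : A' ≤ a) (hδ : 0 ≤ δ) (hδ_le : δ ≤ ⟪g, x - xs⟫)
    (hz : z = b • v + c • g + x) :
    A' * δ + a * b * ⟪g, v⟫ + ⟪z - xs, -a • g⟫ ≤ 0 := by
  have hexpand : ⟪z - xs, -a • g⟫ = -(a * b * ⟪g, v⟫) - a * c * ‖g‖ ^ 2 - a * ⟪g, x - xs⟫ := by
    rw [hz, add_sub_assoc, real_inner_comm, inner_smul_left, inner_add_right, inner_add_right,
      inner_smul_right, inner_smul_right, real_inner_self_eq_norm_sq]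
    simp only [conj_trivial]
    ring
  rw [hexpand]
  nlinarith [mul_le_mul_of_nonneg_left hδ_le ha, mul_nonneg (mul_nonneg ha hc) (sq_nonneg ‖g‖),
    mul_le_mul_of_nonneg_right hA' hδ]

end Lyapunov

theorem sppa_stmt0_general
    {H : Type*} [NormedAddCommGroup H] [InnerProductSpace ℝ H] [CompleteSpace H]
    (f : H → ℝ) (g : H → H)
    (hconv : ConvexOn ℝ Set.univ f)
    (hgrad : ∀ x, HasGradientAt f (g x) x)
    (xs : H) (hmin : ∀ y, f xs ≤ f y)
    (a b c : ℝ → ℝ)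
    (hapos : ∀ t > (0:ℝ), 0 < a t)
    (hcpos : ∀ t > (0:ℝ), 0 < c t)
    (X Z X' : ℝ → H)
    (hX : ∀ t ∈ Set.Ici (0:ℝ), HasDerivAt X (X' t) t)
    (hZeq : ∀ t ∈ Set.Ici (0:ℝ), Z t = b t • X' t + c t • g (X t) + X t)
    (hZ' : ∀ t ∈ Set.Ici (0:ℝ), HasDerivAt Z (-(a t) • g (X t)) t)
    (A' : ℝ → ℝ)
    (hA : ∀ t ∈ Set.Ici (0:ℝ), HasDerivAt (fun s => a s * b s) (A' t) t)
    (hA'le : ∀ t ∈ Set.Ici (0:ℝ), A' t ≤ a t) :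
    AntitoneOn
      (fun t => a t * b t * (f (X t) - f xs) + (1/2) * ‖Z t - xs‖^2)
      (Set.Ici (0:ℝ)) := by
  have hE : ∀ t ∈ Ici (0 : ℝ), HasDerivAt (lyapunovEnergy f xs (fun s => a s * b s) X Z)
      (A' t * (f (X t) - f xs) + a t * b t * ⟪g (X t), X' t⟫
        + ⟪Z t - xs, -(a t) • g (X t)⟫) t :=
    fun t ht => hasDerivAt_lyapunovEnergy xs (hA t ht) (hX t ht) (hZ' t ht) (hgrad _)
  refine antitoneOn_of_hasDerivWithinAt_nonpos (convex_Ici 0)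
    (fun t ht => (hE t ht).continuousAt.continuousWithinAt)
    (fun t ht => (hE t (interior_subset ht)).hasDerivWithinAt) ?_
  rw [interior_Ici]
  intro t ht
  have ht' : t ∈ Ici (0 : ℝ) := mem_Ici.2 ht.le
  have hgap : f (X t) - f xs ≤ ⟪g (X t), X t - xs⟫ := by
    have := hconv.add_inner_sub_le_of_hasGradientAt (mem_univ (X t)) (mem_univ xs) (hgrad _)
    rw [← neg_sub, inner_neg_right] at this
    linarith
  exact lyapunovEnergy_deriv_nonpos (hapos t ht).le (hcpos t ht).le (hA'le t ht')
    (sub_nonneg.2 (hmin _)) hgap (hZeq t ht')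

/-- Continuous-time Lyapunov function
`E(t) = A_t (f(X t) - f x*) + (1/2)‖Z t - x*‖²` with `A_t = a_t b_t`
is non-increasing on `[0, ∞)` along the ODE system
`Z = b_t Ẋ + c_t ∇f(X) + X`, `Ż = -a_t ∇f(X)`, provided `0 ≤ Ȧ_t ≤ a_t`. -/
theorem sppa_stmt0
    {H : Type*} [NormedAddCommGroup H] [InnerProductSpace ℝ H] [CompleteSpace H]
    (f : H → ℝ) (g : H → H)
    (hconv : ConvexOn ℝ Set.univ f)
    (hgrad : ∀ x, HasGradientAt f (g x) x)
    (xs : H) (hmin : ∀ y, f xs ≤ f y)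
    (a b c : ℝ → ℝ)
    (hapos : ∀ t > (0:ℝ), 0 < a t) (hbpos : ∀ t > (0:ℝ), 0 < b t)
    (hcpos : ∀ t > (0:ℝ), 0 < c t)
    (ha0 : 0 ≤ a 0) (hb0 : 0 ≤ b 0) (hc0 : 0 ≤ c 0)
    (x0 : H) (X Z X' : ℝ → H)
    (hX0 : X 0 = x0) (hZ0 : Z 0 = x0)
    (hX : ∀ t ∈ Set.Ici (0:ℝ), HasDerivAt X (X' t) t)
    (hZeq : ∀ t ∈ Set.Ici (0:ℝ), Z t = b t • X' t + c t • g (X t) + X t)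
    (hZ' : ∀ t ∈ Set.Ici (0:ℝ), HasDerivAt Z (-(a t) • g (X t)) t)
    (A' : ℝ → ℝ)
    (hA : ∀ t ∈ Set.Ici (0:ℝ), HasDerivAt (fun s => a s * b s) (A' t) t)
    (hA'nonneg : ∀ t ∈ Set.Ici (0:ℝ), 0 ≤ A' t)
    (hA'le : ∀ t ∈ Set.Ici (0:ℝ), A' t ≤ a t) :
    AntitoneOn
      (fun t => a t * b t * (f (X t) - f xs) + (1/2) * ‖Z t - xs‖^2)
      (Set.Ici (0:ℝ)) :=
  sppa_stmt0_general f g hconv hgrad xs hmin a b c hapos hcpos X Z X' hX hZeq hZ' A' hA hA'le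
end

section
/- Let f : H → ℝ be a proper closed convex function on a real Hilbert space with minimizer x*, let sequences (x_k), (z_k) satisfy z_k = b_k(x_{k+1} − x_k) + c_k g_{k+1} + x_{k+1} and z_{k+1} = z_k − a_k g_{k+1} where g_{k+1} ∈ ∂f(x_{k+1}). If A_k := a_k b_k satisfies 0 ≤ A_{k+1} − A_k ≤ a_k and c_k ≥ a_k/2, then E(k) := A_k(f(x_k) − f(x*)) + (1/2)‖z_k − x*‖² is non-increasing in k. -/
open Set Filter Topology RealInnerProductSpace

/-- Discrete Lyapunov function
`E k = A_k (f(x_k) - f x*) + (1/2)‖z_k - x*‖²` with `A_k = a_k b_k`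
is non-increasing along the discrete symplectic recursion
`z_k = b_k (x_{k+1} - x_k) + c_k g_{k+1} + x_{k+1}`, `z_{k+1} = z_k - a_k g_{k+1}`,
with `g_{k+1} ∈ ∂f(x_{k+1})`, `0 ≤ A_{k+1} - A_k ≤ a_k` and `c_k ≥ a_k/2`. -/
theorem sppa_stmt4
    {H : Type*} [NormedAddCommGroup H] [InnerProductSpace ℝ H] [CompleteSpace H]
    (f : H → ℝ)
    (hconv : ConvexOn ℝ Set.univ f) (hlsc : LowerSemicontinuous f)
    (xs : H) (hmin : ∀ y, f xs ≤ f y)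
    (a b c : ℕ → ℝ)
    (hapos : ∀ k ≥ 1, 0 < a k) (hbpos : ∀ k ≥ 1, 0 < b k) (hcpos : ∀ k ≥ 1, 0 < c k)
    (ha0 : 0 ≤ a 0) (hb0 : 0 ≤ b 0) (hc0 : 0 ≤ c 0)
    (x z g : ℕ → H) (hz0 : z 0 = x 0)
    (hsub : ∀ (k : ℕ) (y : H), f (x (k+1)) + ⟪g (k+1), y - x (k+1)⟫ ≤ f y)
    (hzk : ∀ k : ℕ, z k = b k • (x (k+1) - x k) + c k • g (k+1) + x (k+1))
    (hzk1 : ∀ k : ℕ, z (k+1) = z k - a k • g (k+1))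
    (hAmono : ∀ k : ℕ, 0 ≤ a (k+1) * b (k+1) - a k * b k)
    (hAle : ∀ k : ℕ, a (k+1) * b (k+1) - a k * b k ≤ a k)
    (hca : ∀ k : ℕ, c k ≥ a k / 2) :
    ∀ k : ℕ,
      a (k+1) * b (k+1) * (f (x (k+1)) - f xs) + (1/2) * ‖z (k+1) - xs‖^2 ≤
        a k * b k * (f (x k) - f xs) + (1/2) * ‖z k - xs‖^2 := by
  intro k
  have ha : 0 ≤ a k := by cases k with
    | zero => exact ha0
    | succ n => exact (hapos _ (Nat.succ_le_succ (Nat.zero_le n))).le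
  have hb : 0 ≤ b k := by cases k with
    | zero => exact hb0
    | succ n => exact (hbpos _ (Nat.succ_le_succ (Nat.zero_le n))).le
  set g1 := g (k+1) with hg1
  have hPQ : z k - xs = b k • (x (k+1) - x k) + c k • g1 + (x (k+1) - xs) := by
    rw [hzk k]; abel
  have hnorm : ‖z (k+1) - xs‖^2
      = ‖z k - xs‖^2 - 2 * (a k * ⟪z k - xs, g1⟫) + (a k)^2 * ‖g1‖^2 := by
    have h1 : z (k+1) - xs = (z k - xs) - a k • g1 := by rw [hzk1 k]; abel
    rw [h1, @norm_sub_sq_real, real_inner_smul_right, norm_smul, mul_pow, Real.norm_eq_abs, sq_abs]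
  have hinner : ⟪z k - xs, g1⟫
      = b k * ⟪x (k+1) - x k, g1⟫ + c k * ‖g1‖^2 + ⟪x (k+1) - xs, g1⟫ := by
    rw [hPQ, inner_add_left, inner_add_left, real_inner_smul_left,
      real_inner_smul_left, real_inner_self_eq_norm_sq]
  have hs1 : f (x (k+1)) - f xs ≤ ⟪x (k+1) - xs, g1⟫ := by
    have := hsub k xs
    have e : ⟪g1, xs - x (k+1)⟫ = - ⟪x (k+1) - xs, g1⟫ := by
      rw [real_inner_comm, ← inner_neg_left, neg_sub]
    rw [e] at this; linarith
  have hs2 : f (x (k+1)) - f (x k) ≤ ⟪x (k+1) - x k, g1⟫ := by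
    have := hsub k (x k)
    have e : ⟪g1, x k - x (k+1)⟫ = - ⟪x (k+1) - x k, g1⟫ := by
      rw [real_inner_comm, ← inner_neg_left, neg_sub]
    rw [e] at this; linarith
  have hmin1 : 0 ≤ f (x (k+1)) - f xs := by linarith [hmin (x (k+1))]
  have hG : (0:ℝ) ≤ ‖g1‖^2 := sq_nonneg _
  have hAm := hAmono k
  have hAl := hAle k
  have hc := hca k
  rw [hnorm, hinner]
  nlinarith [mul_le_mul_of_nonneg_left hs2 (mul_nonneg ha hb),
    mul_le_mul_of_nonneg_left hs1 ha,
    mul_le_mul_of_nonneg_right hAl hmin1,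
    mul_nonneg hAm hmin1,
    mul_le_mul_of_nonneg_right (mul_le_mul_of_nonneg_left hc ha) hG,
    sq_nonneg (a k)]
end

section
/- Under the conditions A_k = a_k b_k, 0 ≤ A_{k+1} − A_k ≤ a_k, c_k ≥ a_k/2, the iterates of the Symplectic Proximal Point Algorithm satisfy f(x_k) − f* ≤ (A₀/A_k)(f(x₀) − f*) + dist(x₀,Ω)²/(2 A_k) for all k with A_k > 0. -/
/-!
With `g := ((b_k + 1)/c_k) (x̃_{k+1} - x_{k+1})`, optimality of the proximal step says `g` is a
subgradient of `f` at `x_{k+1}`, and the `z`-update reads `z_{k+1} = z_k - a_k g`. For every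
minimizer `w`, expanding `‖z_{k+1} - w‖²` and using the subgradient inequality at `w` and at `x_k`
shows that the Lyapunov function `E_k = A_k (f(x_k) - f(w)) + ‖z_k - w‖²/2` is nonincreasing,
exactly because `A_{k+1} ≤ A_k + a_k` and `a_k²/2 ≤ a_k c_k`. Hence
`2 A_k (f(x_k) - f*) - 2 A₀ (f(x₀) - f*) ≤ ‖x₀ - w‖²` for all `w ∈ Ω`, and taking the infimum over
`w` gives the bound with `dist(x₀, Ω)²`.
-/

open Set Filter Topology

lemma nonneg_of_forall_mem_Ioc_add_mul_nonneg {p q : ℝ}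
    (h : ∀ t ∈ Ioc (0 : ℝ) 1, 0 ≤ p + t * q) : 0 ≤ p := by
  have hlim : Tendsto (fun t : ℝ => p + t * q) (𝓝[>] 0) (𝓝 p) := by
    have h : Tendsto (fun t : ℝ => p + t * q) (𝓝 0) (𝓝 (p + 0 * q)) :=
      (continuous_const.add (continuous_id.mul continuous_const)).tendsto 0
    simpa using h.mono_left nhdsWithin_le_nhds
  exact ge_of_tendsto hlim (Filter.mem_of_superset (Ioc_mem_nhdsGT one_pos) h)

lemma Metric.le_infDist_sq_of_forall_le_dist_sq {α : Type*} [PseudoMetricSpace α] {x : α}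
    {s : Set α} (hs : s.Nonempty) {r : ℝ} (h : ∀ y ∈ s, r ≤ dist x y ^ 2) :
    r ≤ infDist x s ^ 2 :=
  (Real.sqrt_le_iff.1 <| (le_infDist hs).2 fun y hy =>
    Real.sqrt_le_iff.2 ⟨dist_nonneg, h y hy⟩).2

section Prox

variable {H : Type*} [NormedAddCommGroup H] [InnerProductSpace ℝ H] {f : H → ℝ}

open scoped RealInnerProductSpace

lemma ConvexOn.le_add_inner_of_isMinOn_add_sq_norm (hf : ConvexOn ℝ univ f) {s : ℝ}
    (hs : 0 ≤ s) {t u : H} (hu : IsMinOn (fun y => f y + s * ‖y - t‖ ^ 2) univ u) (y : H) :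
    f u ≤ f y + ⟪(2 * s) • (t - u), u - y⟫ := by
  have hinner : ⟪(2 * s) • (t - u), u - y⟫ = 2 * s * ⟪u - t, y - u⟫ := by
    rw [real_inner_smul_left, ← inner_neg_neg, neg_sub, neg_sub]
  rw [hinner, ← sub_nonneg]
  -- compare `u` with `u + τ (y - u)` and let `τ → 0⁺`
  refine nonneg_of_forall_mem_Ioc_add_mul_nonneg (q := s * ‖y - u‖ ^ 2) fun τ ⟨hτ0, hτ1⟩ => ?_
  have hmin : f u + s * ‖u - t‖ ^ 2 ≤ f (u + τ • (y - u)) + s * ‖u + τ • (y - u) - t‖ ^ 2 :=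
    isMinOn_iff.1 hu _ (mem_univ _)
  have hconv : f (u + τ • (y - u)) ≤ (1 - τ) * f u + τ * f y := by
    have h := hf.2 (mem_univ u) (mem_univ y) (sub_nonneg.2 hτ1) hτ0.le (sub_add_cancel 1 τ)
    rwa [show (1 - τ) • u + τ • y = u + τ • (y - u) by module] at h
  have hnorm : ‖u + τ • (y - u) - t‖ ^ 2
      = ‖u - t‖ ^ 2 + 2 * τ * ⟪u - t, y - u⟫ + τ ^ 2 * ‖y - u‖ ^ 2 := by
    rw [show u + τ • (y - u) - t = (u - t) + τ • (y - u) by abel, norm_add_sq_real,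
      real_inner_smul_right, norm_smul, Real.norm_eq_abs, mul_pow, sq_abs]
    ring
  refine (mul_nonneg_iff_of_pos_left hτ0).1 ?_
  nlinarith

lemma sppa_lyapunov_step (hf : ConvexOn ℝ univ f) {w : H} (hw : ∀ y, f w ≤ f y)
    {a b c A' : ℝ} (ha : 0 ≤ a) (hb : 0 ≤ b) (hca : c ≥ a / 2) (hA' : A' - a * b ≤ a)
    {x z xt u z' : H} (hxt : xt = (1 / (b + 1)) • z + (b / (b + 1)) • x)
    (hu : IsMinOn (fun y => f y + ((b + 1) / (2 * c)) * ‖y - xt‖ ^ 2) univ u)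
    (hz' : z' = z + ((a * (b + 1)) / c) • (u - xt)) :
    A' * (f u - f w) + ‖z' - w‖ ^ 2 / 2 ≤ a * b * (f x - f w) + ‖z - w‖ ^ 2 / 2 := by
  have hc : 0 ≤ c := by linarith
  have hb1 : b + 1 ≠ 0 := by positivity
  set g : H := ((b + 1) / c) • (xt - u) with hg
  have hsub : ∀ y, f u ≤ f y + ⟪g, u - y⟫ := by
    have h2s : 2 * ((b + 1) / (2 * c)) = (b + 1) / c := by ring
    simpa only [h2s] using hf.le_add_inner_of_isMinOn_add_sq_norm (by positivity) hu
  have hxt' : (b + 1) • xt = z + b • x := by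
    rw [hxt, smul_add, smul_smul, smul_smul, mul_one_div_cancel hb1, mul_div_cancel₀ _ hb1,
      one_smul]
  have hzw : z - w = (u - w) + (b + 1) • (xt - u) + b • (u - x) := by
    linear_combination (norm := module) -hxt'
  have hz'w : z' - w = (z - w) - a • g := by
    rw [hz', hg]; module
  have hgg : ⟪g, (b + 1) • (xt - u)⟫ = c * ‖g‖ ^ 2 := by
    -- for `c = 0`, `g = 0` by the convention `x / 0 = 0`
    rcases hc.eq_or_lt with rfl | hc
    · simp [hg]
    · rw [hg, real_inner_smul_left, real_inner_smul_right, real_inner_self_eq_norm_sq,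
        norm_smul, Real.norm_eq_abs, mul_pow, sq_abs]
      field_simp
  have hinner : (f u - f w) + c * ‖g‖ ^ 2 + b * (f u - f x) ≤ ⟪g, z - w⟫ := by
    rw [hzw, inner_add_right, inner_add_right, hgg, real_inner_smul_right]
    nlinarith [hsub w, hsub x]
  have hnorm : ‖z' - w‖ ^ 2 = ‖z - w‖ ^ 2 - 2 * a * ⟪g, z - w⟫ + a ^ 2 * ‖g‖ ^ 2 := by
    rw [hz'w, norm_sub_sq_real, real_inner_smul_right, real_inner_comm, norm_smul,
      Real.norm_eq_abs, mul_pow, sq_abs]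
    ring
  have hgap : 0 ≤ f u - f w := sub_nonneg.2 (hw u)
  nlinarith [mul_le_mul_of_nonneg_left hinner ha, mul_nonneg ha (sq_nonneg ‖g‖)]

end Prox

theorem sppa_stmt5_general
    {H : Type*} [NormedAddCommGroup H] [InnerProductSpace ℝ H]
    (f : H → ℝ)
    (hconv : ConvexOn ℝ Set.univ f)
    (Ω : Set H) (hΩ : Ω = {y : H | ∀ w, f y ≤ f w})
    (xs : H) (hxs : xs ∈ Ω)
    (a b c : ℕ → ℝ)
    (hapos : ∀ k ≥ 1, 0 < a k) (hbpos : ∀ k ≥ 1, 0 < b k)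
    (ha0 : 0 ≤ a 0) (hb0 : 0 ≤ b 0)
    (x xt z : ℕ → H) (hz0 : z 0 = x 0)
    (hxt : ∀ k : ℕ, xt (k+1) = (1 / (b k + 1)) • z k + (b k / (b k + 1)) • x k)
    (hxmin : ∀ k : ℕ, IsMinOn
      (fun y => f y + ((b k + 1) / (2 * c k)) * ‖y - xt (k+1)‖^2)
      Set.univ (x (k+1)))
    (hzk1 : ∀ k : ℕ,
      z (k+1) = z k + ((a k * (b k + 1)) / c k) • (x (k+1) - xt (k+1)))
    (hAle : ∀ k : ℕ, a (k+1) * b (k+1) - a k * b k ≤ a k)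
    (hca : ∀ k : ℕ, c k ≥ a k / 2) :
    ∀ k : ℕ, 0 < a k * b k →
      f (x k) - f xs ≤
        (a 0 * b 0) / (a k * b k) * (f (x 0) - f xs)
          + (Metric.infDist (x 0) Ω)^2 / (2 * (a k * b k)) := by
  intro k hk
  have ha : ∀ n, 0 ≤ a n := fun n => n.eq_zero_or_pos.elim (· ▸ ha0) fun h => (hapos n h).le
  have hb : ∀ n, 0 ≤ b n := fun n => n.eq_zero_or_pos.elim (· ▸ hb0) fun h => (hbpos n h).le
  have hmin : ∀ w ∈ Ω, ∀ y, f w ≤ f y := fun w hw => by rwa [hΩ] at hw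
  have hbound : ∀ w ∈ Ω, 2 * (a k * b k) * (f (x k) - f xs)
      - 2 * (a 0 * b 0) * (f (x 0) - f xs) ≤ dist (x 0) w ^ 2 := by
    intro w hw
    have hfw : f w = f xs := le_antisymm (hmin w hw xs) (hmin xs hxs w)
    have hE : Antitone fun n => a n * b n * (f (x n) - f w) + ‖z n - w‖ ^ 2 / 2 :=
      antitone_nat_of_succ_le fun n => sppa_lyapunov_step hconv (hmin w hw) (ha n) (hb n)
        (hca n) (hAle n) (hxt n) (hxmin n) (hzk1 n)
    have hEk := hE (Nat.zero_le k)
    simp only [hz0, hfw] at hEk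
    rw [dist_eq_norm]
    nlinarith [sq_nonneg ‖z k - w‖]
  have hD := Metric.le_infDist_sq_of_forall_le_dist_sq ⟨xs, hxs⟩ hbound
  rw [div_mul_eq_mul_div, div_add_div _ _ hk.ne' (by positivity), le_div_iff₀ (by positivity)]
  nlinarith

/-- Convergence rate of the Symplectic Proximal Point Algorithm:
`f(x_k) - f* ≤ (A₀/A_k)(f(x₀) - f*) + dist(x₀,Ω)²/(2 A_k)` whenever `A_k > 0`. -/
theorem sppa_stmt5
    {H : Type*} [NormedAddCommGroup H] [InnerProductSpace ℝ H] [CompleteSpace H]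
    (f : H → ℝ)
    (hconv : ConvexOn ℝ Set.univ f) (hlsc : LowerSemicontinuous f)
    (Ω : Set H) (hΩ : Ω = {y : H | ∀ w, f y ≤ f w}) (hΩne : Ω.Nonempty)
    (xs : H) (hxs : xs ∈ Ω)
    (a b c : ℕ → ℝ)
    (hapos : ∀ k ≥ 1, 0 < a k) (hbpos : ∀ k ≥ 1, 0 < b k) (hcpos : ∀ k ≥ 1, 0 < c k)
    (ha0 : 0 ≤ a 0) (hb0 : 0 ≤ b 0) (hc0 : 0 ≤ c 0)
    (x xt z : ℕ → H) (hz0 : z 0 = x 0)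
    (hxt : ∀ k : ℕ, xt (k+1) = (1 / (b k + 1)) • z k + (b k / (b k + 1)) • x k)
    (hxmin : ∀ k : ℕ, IsMinOn
      (fun y => f y + ((b k + 1) / (2 * c k)) * ‖y - xt (k+1)‖^2)
      Set.univ (x (k+1)))
    (hzk1 : ∀ k : ℕ,
      z (k+1) = z k + ((a k * (b k + 1)) / c k) • (x (k+1) - xt (k+1)))
    (hAmono : ∀ k : ℕ, 0 ≤ a (k+1) * b (k+1) - a k * b k)
    (hAle : ∀ k : ℕ, a (k+1) * b (k+1) - a k * b k ≤ a k)
    (hca : ∀ k : ℕ, c k ≥ a k / 2) :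
    ∀ k : ℕ, 0 < a k * b k →
      f (x k) - f xs ≤
        (a 0 * b 0) / (a k * b k) * (f (x 0) - f xs)
          + (Metric.infDist (x 0) Ω)^2 / (2 * (a k * b k)) :=
  sppa_stmt5_general f hconv Ω hΩ xs hxs a b c hapos hbpos ha0 hb0 x xt z hz0 hxt hxmin hzk1 hAle
    hca
end

section
/- For the discrete SPPA iterates with A_k = a_k b_k, 0 ≤ A_{k+1} − A_k ≤ a_k, and c_k ≥ a_k/2, the sum ∑_{k=0}^∞ (a_k c_k − a_k²/2) ‖g_{k+1}‖² is bounded above by A₀(f(x₀) − f*) + (1/2)dist(x₀,Ω)², where g_{k+1} = ((b_k+1)/c_k)(x̃_{k+1} − x_{k+1}) ∈ ∂f(x_{k+1}). -/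
open Set Filter Topology
open scoped RealInnerProductSpace

theorem sppa_subgrad
    {H : Type*} [NormedAddCommGroup H] [InnerProductSpace ℝ H]
    (f : H → ℝ) (hconv : ConvexOn ℝ Set.univ f)
    (b c : ℝ) (hb : 0 ≤ b) (hc : 0 ≤ c) (xt x1 : H)
    (hmin : IsMinOn (fun y => f y + ((b + 1) / (2 * c)) * ‖y - xt‖^2) Set.univ x1)
    (y : H) :
    f x1 + ⟪((b + 1) / c) • (xt - x1), y - x1⟫ ≤ f y := by
  rcases eq_or_lt_of_le hc with h0 | hcpos
  · have h1 := hmin (Set.mem_univ y)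
    simp only [← h0, mul_zero, div_zero, zero_mul, zero_smul, inner_zero_left] at h1 ⊢
    simpa using h1
  · set lam : ℝ := (b + 1) / c with hlam_def
    have hb1 : (0:ℝ) < b + 1 := by linarith
    have hlam : 0 < lam := div_pos hb1 hcpos
    have hhalf : (b + 1) / (2 * c) = lam / 2 := by
      rw [hlam_def, div_div, mul_comm]
    set u : H := x1 - xt with hu
    set v : H := y - x1 with hv
    have key : ∀ t : ℝ, t ∈ Set.Ioc (0:ℝ) 1 →
        f x1 - f y ≤ lam * ⟪u, v⟫ + lam / 2 * t * ‖v‖^2 := by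
      intro t ht
      obtain ⟨ht0, ht1⟩ := ht
      have hmin' := hmin (Set.mem_univ (x1 + t • v))
      simp only [hhalf] at hmin'
      have hcvx : f (x1 + t • v) ≤ (1 - t) * f x1 + t * f y := by
        have := hconv.2 (Set.mem_univ x1) (Set.mem_univ y)
          (by linarith : (0:ℝ) ≤ 1 - t) ht0.le (by ring)
        have heq : (1 - t) • x1 + t • y = x1 + t • v := by
          rw [hv]; module
        rw [heq] at this
        simpa using this
      have hnorm : ‖x1 + t • v - xt‖^2 = ‖u‖^2 + 2 * (t * ⟪u, v⟫) + t^2 * ‖v‖^2 := by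
        have : x1 + t • v - xt = u + t • v := by rw [hu]; abel
        rw [this, norm_add_sq_real, real_inner_smul_right, norm_smul]
        simp [mul_pow, sq_abs]
      have h2 : t * (f x1 - f y) ≤ t * (lam * ⟪u, v⟫ + lam / 2 * t * ‖v‖^2) := by
        simp only [isMinOn_univ_iff] at hmin
        have hm := hmin (x1 + t • v)
        rw [hnorm] at hm
        have hux : ‖x1 - xt‖ = ‖u‖ := by rw [hu]
        rw [hux] at hm
        nlinarith [hm, hcvx]
      exact le_of_mul_le_mul_left (by linarith [h2]) ht0
    have htend : Tendsto (fun t : ℝ => lam * ⟪u, v⟫ + lam / 2 * t * ‖v‖^2)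
        (𝓝[>] (0:ℝ)) (𝓝 (lam * ⟪u, v⟫)) := by
      have : Continuous (fun t : ℝ => lam * ⟪u, v⟫ + lam / 2 * t * ‖v‖^2) := by
        continuity
      have h2 := (this.tendsto 0).mono_left (nhdsWithin_le_nhds (s := Set.Ioi (0:ℝ)))
      simpa using h2
    have hfin : f x1 - f y ≤ lam * ⟪u, v⟫ := by
      refine ge_of_tendsto htend ?_
      filter_upwards [Ioc_mem_nhdsGT (zero_lt_one)] with t ht
      exact key t ht
    have hip : ⟪lam • (xt - x1), y - x1⟫ = - (lam * ⟪u, v⟫) := by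
      rw [real_inner_smul_left]
      have : (xt - x1) = -u := by rw [hu]; abel
      rw [this, inner_neg_left, ← hv]
      ring
    rw [hip]
    linarith

/-- For the SPPA iterates, with `g_{k+1} = ((b_k+1)/c_k)(x̃_{k+1} - x_{k+1})`,
`∑_{k=0}^∞ (a_k c_k - a_k²/2) ‖g_{k+1}‖² ≤ A₀(f(x₀) - f*) + (1/2) dist(x₀,Ω)²`
(stated via its partial sums, which is equivalent since every summand is nonnegative). -/
theorem sppa_stmt6
    {H : Type*} [NormedAddCommGroup H] [InnerProductSpace ℝ H] [CompleteSpace H]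
    (f : H → ℝ)
    (hconv : ConvexOn ℝ Set.univ f) (hlsc : LowerSemicontinuous f)
    (Ω : Set H) (hΩ : Ω = {y : H | ∀ w, f y ≤ f w}) (hΩne : Ω.Nonempty)
    (xs : H) (hxs : xs ∈ Ω)
    (a b c : ℕ → ℝ)
    (hapos : ∀ k ≥ 1, 0 < a k) (hbpos : ∀ k ≥ 1, 0 < b k) (hcpos : ∀ k ≥ 1, 0 < c k)
    (ha0 : 0 ≤ a 0) (hb0 : 0 ≤ b 0) (hc0 : 0 ≤ c 0)
    (x xt z : ℕ → H) (hz0 : z 0 = x 0)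
    (hxt : ∀ k : ℕ, xt (k+1) = (1 / (b k + 1)) • z k + (b k / (b k + 1)) • x k)
    (hxmin : ∀ k : ℕ, IsMinOn
      (fun y => f y + ((b k + 1) / (2 * c k)) * ‖y - xt (k+1)‖^2)
      Set.univ (x (k+1)))
    (hzk1 : ∀ k : ℕ,
      z (k+1) = z k + ((a k * (b k + 1)) / c k) • (x (k+1) - xt (k+1)))
    (hAmono : ∀ k : ℕ, 0 ≤ a (k+1) * b (k+1) - a k * b k)
    (hAle : ∀ k : ℕ, a (k+1) * b (k+1) - a k * b k ≤ a k)
    (hca : ∀ k : ℕ, c k ≥ a k / 2) :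
    ∀ n : ℕ,
      ∑ k ∈ Finset.range n,
          (a k * c k - (a k)^2 / 2) *
            ‖((b k + 1) / c k) • (xt (k+1) - x (k+1))‖^2 ≤
        a 0 * b 0 * (f (x 0) - f xs) + (1/2) * (Metric.infDist (x 0) Ω)^2 := by
  intro n
  -- nonnegativity of the parameter sequences
  have ha : ∀ k, 0 ≤ a k := by
    intro k; cases k with
    | zero => exact ha0
    | succ m => exact (hapos _ (Nat.succ_le_succ (Nat.zero_le m))).le
  have hb : ∀ k, 0 ≤ b k := by
    intro k; cases k with
    | zero => exact hb0
    | succ m => exact (hbpos _ (Nat.succ_le_succ (Nat.zero_le m))).le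
  have hc : ∀ k, 0 ≤ c k := by
    intro k; cases k with
    | zero => exact hc0
    | succ m => exact (hcpos _ (Nat.succ_le_succ (Nat.zero_le m))).le
  have hΩmin : ∀ w ∈ Ω, ∀ v, f w ≤ f v := by
    intro w hw v
    rw [hΩ] at hw
    exact hw v
  -- the subgradient vectors
  set g : ℕ → H := fun k => ((b k + 1) / c k) • (xt (k+1) - x (k+1)) with hg_def
  have hg : ∀ k (y : H), f (x (k+1)) + ⟪g k, y - x (k+1)⟫ ≤ f y := by
    intro k y
    exact sppa_subgrad f hconv (b k) (c k) (hb k) (hc k) (xt (k+1)) (x (k+1)) (hxmin k) y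
  -- z recursion rewritten
  have hzs : ∀ k, z (k+1) = z k - a k • g k := by
    intro k
    have h1 : a k • g k = ((a k * (b k + 1)) / c k) • (xt (k+1) - x (k+1)) := by
      rw [hg_def]
      rw [smul_smul, mul_div_assoc]
    rw [hzk1 k, h1]
    module
  -- inner product identity
  have hident : ∀ k (w : H),
      (a k * b k) * ⟪g k, x (k+1) - x k⟫ + a k * ⟪g k, x (k+1) - w⟫
        = a k * ⟪g k, z k - w⟫ - (a k * c k) * ‖g k‖^2 := by
    intro k w
    by_cases hck : c k = 0
    · have : g k = 0 := by rw [hg_def]; simp [hck]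
      simp [this]
    · have hckpos : 0 < c k := lt_of_le_of_ne (hc k) (Ne.symm hck)
      have hbk1 : (0:ℝ) < b k + 1 := by linarith [hb k]
      have hxe : xt (k+1) - x (k+1) = (c k / (b k + 1)) • g k := by
        rw [hg_def, smul_smul]
        have : c k / (b k + 1) * ((b k + 1) / c k) = 1 := by
          field_simp
        rw [this, one_smul]
      have hxp : x (k+1) = xt (k+1) - (c k / (b k + 1)) • g k := by
        rw [← hxe]; abel
      have hvec : (a k * b k) • (x (k+1) - x k) + a k • (x (k+1) - w)
          = a k • (z k - w) - (a k * c k) • g k := by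
        rw [hxp, hxt k]
        match_scalars <;> field_simp <;> ring
      have := congrArg (fun v => (⟪g k, v⟫ : ℝ)) hvec
      simp only [inner_add_right, inner_sub_right, real_inner_smul_right,
        real_inner_self_eq_norm_sq] at this
      simp only [inner_sub_right]
      linarith [this]
  -- expansion of the norm of z_{k+1} - w
  have hnorm : ∀ k (w : H),
      ‖z (k+1) - w‖^2 = ‖z k - w‖^2 - 2 * (a k * ⟪g k, z k - w⟫) + (a k)^2 * ‖g k‖^2 := by
    intro k w
    rw [hzs k]
    have h1 : z k - a k • g k - w = (z k - w) - a k • g k := by abel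
    rw [h1, norm_sub_sq_real, real_inner_smul_right, norm_smul, real_inner_comm]
    simp [mul_pow, sq_abs]
  -- the one-step energy inequality
  have hstep : ∀ w ∈ Ω, ∀ k,
      a (k+1) * b (k+1) * (f (x (k+1)) - f w) + (1/2) * ‖z (k+1) - w‖^2
          + (a k * c k - (a k)^2 / 2) * ‖g k‖^2
        ≤ a k * b k * (f (x k) - f w) + (1/2) * ‖z k - w‖^2 := by
    intro w hw k
    have h1 : f (x (k+1)) - f w ≤ ⟪g k, x (k+1) - w⟫ := by
      have := hg k w
      rw [show w - x (k+1) = -(x (k+1) - w) from by abel, inner_neg_right] at this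
      linarith
    have h2 : f (x (k+1)) - f w ≤ (f (x k) - f w) + ⟪g k, x (k+1) - x k⟫ := by
      have := hg k (x k)
      rw [show x k - x (k+1) = -(x (k+1) - x k) from by abel, inner_neg_right] at this
      linarith
    have h3 : 0 ≤ f (x (k+1)) - f w := by linarith [hΩmin w hw (x (k+1))]
    have hA : 0 ≤ a k * b k := mul_nonneg (ha k) (hb k)
    have hm1 : (a (k+1) * b (k+1) - a k * b k) * (f (x (k+1)) - f w)
        ≤ a k * (f (x (k+1)) - f w) := mul_le_mul_of_nonneg_right (hAle k) h3
    have hm2 := mul_le_mul_of_nonneg_left h2 hA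
    have hm3 := mul_le_mul_of_nonneg_left h1 (ha k)
    have h5 := hnorm k w
    have h6 := hident k w
    nlinarith [hm1, hm2, hm3, h5, h6]
  -- telescoping
  have htel : ∀ w ∈ Ω,
      (∑ k ∈ Finset.range n, (a k * c k - (a k)^2 / 2) * ‖g k‖^2)
          + (a n * b n * (f (x n) - f w) + (1/2) * ‖z n - w‖^2)
        ≤ a 0 * b 0 * (f (x 0) - f w) + (1/2) * ‖z 0 - w‖^2 := by
    intro w hw
    induction n with
    | zero => simp
    | succ m ih =>
      rw [Finset.sum_range_succ]
      have := hstep w hw m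
      linarith [ih]
  have hkey : ∀ w ∈ Ω,
      (∑ k ∈ Finset.range n, (a k * c k - (a k)^2 / 2) * ‖g k‖^2)
        ≤ a 0 * b 0 * (f (x 0) - f xs) + (1/2) * ‖x 0 - w‖^2 := by
    intro w hw
    have hfw : f w = f xs := le_antisymm (hΩmin w hw xs) (hΩmin xs hxs w)
    have hEn : 0 ≤ a n * b n * (f (x n) - f w) + (1/2) * ‖z n - w‖^2 := by
      have h3 : 0 ≤ f (x n) - f w := by linarith [hΩmin w hw (x n)]
      have := mul_nonneg (mul_nonneg (ha n) (hb n)) h3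
      positivity
    rw [hfw] at hEn
    have := htel w hw
    rw [hz0, hfw] at this
    linarith [this, hEn]
  -- pass to the infimum distance
  set S : ℝ := ∑ k ∈ Finset.range n, (a k * c k - (a k)^2 / 2) * ‖g k‖^2 with hS_def
  set C : ℝ := a 0 * b 0 * (f (x 0) - f xs) with hC_def
  set D : ℝ := Metric.infDist (x 0) Ω with hD_def
  have hD0 : 0 ≤ D := Metric.infDist_nonneg
  have heps : ∀ ε : ℝ, 0 < ε → S ≤ C + (1/2) * (D + ε)^2 := by
    intro ε hε
    have hlt : Metric.infDist (x 0) Ω < D + ε := by rw [← hD_def]; linarith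
    obtain ⟨w, hw, hdw⟩ := (Metric.infDist_lt_iff hΩne).mp hlt
    have hnw : ‖x 0 - w‖ < D + ε := by rwa [dist_eq_norm] at hdw
    have hnn : (0:ℝ) ≤ ‖x 0 - w‖ := norm_nonneg _
    have hsq : ‖x 0 - w‖^2 ≤ (D + ε)^2 := by nlinarith
    have := hkey w hw
    linarith [this, hsq]
  have htend : Tendsto (fun ε : ℝ => C + (1/2) * (D + ε)^2) (𝓝[>] (0:ℝ))
      (𝓝 (C + (1/2) * D^2)) := by
    have hcont : Continuous (fun ε : ℝ => C + (1/2) * (D + ε)^2) :=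
      continuous_const.add (continuous_const.mul ((continuous_const.add continuous_id).pow 2))
    have h2 := (hcont.tendsto 0).mono_left (nhdsWithin_le_nhds (s := Set.Ioi (0:ℝ)))
    simpa using h2
  have hfin : S ≤ C + (1/2) * D^2 := by
    refine ge_of_tendsto htend ?_
    filter_upwards [self_mem_nhdsWithin] with ε hε
    exact heps ε hε
  exact hfin
end

section
/- Under the SPPA conditions A_k = a_k b_k, 0 ≤ A_{k+1} − A_k ≤ d·a_k for some d ∈ (0,1), and a_k ≥ γ A_k for some γ > 0 and all k, the iterates satisfy lim_{k→∞} A_k(f(x_k) − f*) = 0. -/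
/-!
Fix a minimizer `x*`. The prox step gives the subgradient inequality
`f x⁺ ≤ f y + ((b + 1) / c) ⟪y - x⁺, x⁺ - x̃⁺⟫` for every `y`; tested at `y = x` (weight `A = a b`)
and `y = x*` (weight `a`) and combined with the `z`-update, it shows that the Lyapunov function
`E k = A_k (f x_k - f*) + ½ ‖z_k - x*‖²` satisfies `E (k+1) + (1 - d) a_k (f x_{k+1} - f*) ≤ E k`.
Hence `∑ a_k (f x_{k+1} - f*) < ∞`, and since `A_{k+1} ≤ A_k + d a_k ≤ (γ⁻¹ + d) a_k`, the series
`∑ A_{k+1} (f x_{k+1} - f*)` converges too, so its terms tend to `0`.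
-/

open Set Filter Topology
open scoped RealInnerProductSpace

theorem summable_of_add_le_of_nonneg {E u : ℕ → ℝ} (hE : ∀ k, 0 ≤ E k) (hu : ∀ k, 0 ≤ u k)
    (h : ∀ k, E (k + 1) + u k ≤ E k) : Summable u := by
  refine summable_of_sum_range_le hu (c := E 0) fun n => ?_
  have hle : ∑ k ∈ Finset.range n, u k ≤ ∑ k ∈ Finset.range n, (E k - E (k + 1)) :=
    Finset.sum_le_sum fun k _ => by linarith [h k]
  linarith [Finset.sum_range_sub' E n, hE n]

section

variable {H : Type*} [NormedAddCommGroup H] [InnerProductSpace ℝ H]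

/-- `2 μ (u - p)` is a subgradient of `f` at `p`. -/
theorem ConvexOn.le_add_inner_of_isMinOn_add_sq {f : H → ℝ} (hf : ConvexOn ℝ univ f) {μ : ℝ}
    {u p : H} (hp : IsMinOn (fun y => f y + μ * ‖y - u‖ ^ 2) univ p) (y : H) :
    f p ≤ f y + 2 * μ * ⟪y - p, p - u⟫ := by
  set L := f p - (f y + 2 * μ * ⟪y - p, p - u⟫)
  have hsegment : ∀ t ∈ Ioc (0 : ℝ) 1, L ≤ t * (μ * ‖y - p‖ ^ 2) := by
    rintro t ⟨ht0, ht1⟩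
    have hmin := isMinOn_iff.mp hp ((1 - t) • p + t • y) (mem_univ _)
    have hcvx := hf.2 (mem_univ p) (mem_univ y) (sub_nonneg.2 ht1) ht0.le (by ring)
    have hexpand : ‖(1 - t) • p + t • y - u‖ ^ 2
        = ‖p - u‖ ^ 2 + 2 * (t * ⟪y - p, p - u⟫) + t ^ 2 * ‖y - p‖ ^ 2 := by
      rw [show (1 - t) • p + t • y - u = (p - u) + t • (y - p) by module, norm_add_sq_real,
        real_inner_smul_right, norm_smul, mul_pow, Real.norm_eq_abs, sq_abs, real_inner_comm]
    rw [hexpand] at hmin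
    simp only [smul_eq_mul] at hcvx
    refine le_of_mul_le_mul_left ?_ ht0
    linarith
  have hlim : Tendsto (fun t : ℝ => t * (μ * ‖y - p‖ ^ 2)) (𝓝[>] 0) (𝓝 0) := by
    simpa using
      ((tendsto_id (x := 𝓝 (0 : ℝ))).mul_const (μ * ‖y - p‖ ^ 2)).mono_left nhdsWithin_le_nhds
  have hL : L ≤ 0 :=
    ge_of_tendsto hlim (mem_of_superset (Ioc_mem_nhdsGT one_pos) hsegment)
  linarith

theorem sppa_step_energy_le {f : H → ℝ} (hf : ConvexOn ℝ univ f) {a b c : ℝ} (ha : 0 < a)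
    (hb : 0 ≤ b) (hca : a / 2 ≤ c) {x z xt x' z' : H} (xs : H)
    (hxt : xt = (1 / (b + 1)) • z + (b / (b + 1)) • x)
    (hx' : IsMinOn (fun y => f y + ((b + 1) / (2 * c)) * ‖y - xt‖ ^ 2) univ x')
    (hz' : z' = z + ((a * (b + 1)) / c) • (x' - xt)) :
    (a * b + a) * (f x' - f xs) + 1 / 2 * ‖z' - xs‖ ^ 2
      ≤ a * b * (f x - f xs) + 1 / 2 * ‖z - xs‖ ^ 2 := by
  have hc : 0 < c := by linarith
  have hb1 : b + 1 ≠ 0 := by positivity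
  set r := (b + 1) / c
  set w := x' - xt
  have hsubgrad (y : H) : f x' ≤ f y + r * ⟪y - x', w⟫ := by
    have h := hf.le_add_inner_of_isMinOn_add_sq hx' y
    rwa [show 2 * ((b + 1) / (2 * c)) = r by simp only [r]; field_simp] at h
  have hvec : (a * b) • (x - x') + a • (xs - x') + a • (z - xs) = -(a * (b + 1)) • w := by
    subst hxt
    simp only [w]
    match_scalars <;> field_simp <;> ring
  have hinner : a * b * ⟪x - x', w⟫ + a * ⟪xs - x', w⟫ + a * ⟪z - xs, w⟫
      = -(a * (b + 1)) * ‖w‖ ^ 2 := by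
    simpa [inner_add_left, real_inner_smul_left, real_inner_self_eq_norm_sq]
      using congrArg (⟪·, w⟫) hvec
  have hnorm :
      ‖z' - xs‖ ^ 2 = ‖z - xs‖ ^ 2 + 2 * (a * r * ⟪z - xs, w⟫) + (a * r) ^ 2 * ‖w‖ ^ 2 := by
    rw [show z' - xs = (z - xs) + (a * r) • w by rw [hz', mul_div_assoc]; abel, norm_add_sq_real,
      real_inner_smul_right, norm_smul, mul_pow, Real.norm_eq_abs, sq_abs]
  -- the step size condition `c ≥ a / 2` makes the quadratic term in `w` non-positive
  have hstep : (a * r) ^ 2 / 2 ≤ r * (a * (b + 1)) := by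
    rw [← div_mul_cancel₀ (b + 1) hc.ne']
    have : 0 ≤ r := by positivity
    nlinarith [mul_le_mul_of_nonneg_left hca (by positivity : 0 ≤ a * r ^ 2)]
  linarith [mul_le_mul_of_nonneg_left (hsubgrad x) (by positivity : 0 ≤ a * b),
    mul_le_mul_of_nonneg_left (hsubgrad xs) ha.le,
    mul_le_mul_of_nonneg_right hstep (sq_nonneg ‖w‖), congrArg (r * ·) hinner]

end

theorem sppa_stmt7_general
    {H : Type*} [NormedAddCommGroup H] [InnerProductSpace ℝ H]
    (f : H → ℝ)
    (hconv : ConvexOn ℝ Set.univ f)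
    (xs : H) (hmin : ∀ y, f xs ≤ f y)
    (a b c : ℕ → ℝ)
    (hapos : ∀ k, 0 < a k) (hbpos : ∀ k, 0 < b k)
    (x xt z : ℕ → H)
    (hxt : ∀ k : ℕ, xt (k+1) = (1 / (b k + 1)) • z k + (b k / (b k + 1)) • x k)
    (hxmin : ∀ k : ℕ, IsMinOn
      (fun y => f y + ((b k + 1) / (2 * c k)) * ‖y - xt (k+1)‖^2)
      Set.univ (x (k+1)))
    (hzk1 : ∀ k : ℕ,
      z (k+1) = z k + ((a k * (b k + 1)) / c k) • (x (k+1) - xt (k+1)))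
    (hca : ∀ k : ℕ, c k ≥ a k / 2)
    (d : ℝ) (hd1 : d < 1)
    (hAle : ∀ k : ℕ, a (k+1) * b (k+1) - a k * b k ≤ d * a k)
    (γ : ℝ) (hγ : 0 < γ)
    (haA : ∀ k : ℕ, a k ≥ γ * (a k * b k)) :
    Filter.Tendsto (fun k : ℕ => a k * b k * (f (x k) - f xs))
      Filter.atTop (nhds 0) := by
  have hgap (k : ℕ) : 0 ≤ f (x k) - f xs := sub_nonneg.2 (hmin _)
  have hAgap (k : ℕ) : 0 ≤ a k * b k * (f (x k) - f xs) :=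
    mul_nonneg (mul_nonneg (hapos k).le (hbpos k).le) (hgap k)
  set E : ℕ → ℝ := fun k => a k * b k * (f (x k) - f xs) + 1 / 2 * ‖z k - xs‖ ^ 2
  have hE (k : ℕ) : 0 ≤ E k := add_nonneg (hAgap k) (by positivity)
  have hdecrease (k : ℕ) : E (k + 1) + (1 - d) * (a k * (f (x (k + 1)) - f xs)) ≤ E k := by
    simp only [E]
    linarith [sppa_step_energy_le hconv (hapos k) (hbpos k).le (hca k) xs (hxt k) (hxmin k)
      (hzk1 k), mul_le_mul_of_nonneg_right (hAle k) (hgap (k + 1))]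
  have hsum : Summable fun k => a k * (f (x (k + 1)) - f xs) :=
    (summable_mul_left_iff (sub_ne_zero.2 hd1.ne')).1 <|
      summable_of_add_le_of_nonneg hE
        (fun k => mul_nonneg (sub_nonneg.2 hd1.le) (mul_nonneg (hapos k).le (hgap _))) hdecrease
  have hA (k : ℕ) : a (k + 1) * b (k + 1) ≤ (γ⁻¹ + d) * a k := by
    have : a k * b k ≤ γ⁻¹ * a k := by
      rw [inv_mul_eq_div, le_div_iff₀' hγ]; exact haA k
    linarith [hAle k]
  have hsum' : Summable fun k => a (k + 1) * b (k + 1) * (f (x (k + 1)) - f xs) :=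
    (hsum.mul_left (γ⁻¹ + d)).of_nonneg_of_le (fun k => hAgap (k + 1)) fun k => by
      simpa only [mul_assoc] using mul_le_mul_of_nonneg_right (hA k) (hgap (k + 1))
  exact (tendsto_add_atTop_iff_nat 1).1 hsum'.tendsto_atTop_zero

/-- `o(1/A_k)` rate for SPPA: if `A_k = a_k b_k`,
`0 ≤ A_{k+1} - A_k ≤ d a_k` with `d ∈ (0,1)`, `c_k ≥ a_k/2`, and `a_k ≥ γ A_k`
for some `γ > 0`, then `A_k (f(x_k) - f*) → 0`. -/
theorem sppa_stmt7
    {H : Type*} [NormedAddCommGroup H] [InnerProductSpace ℝ H] [CompleteSpace H]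
    (f : H → ℝ)
    (hconv : ConvexOn ℝ Set.univ f) (hlsc : LowerSemicontinuous f)
    (xs : H) (hmin : ∀ y, f xs ≤ f y)
    (a b c : ℕ → ℝ)
    (hapos : ∀ k, 0 < a k) (hbpos : ∀ k, 0 < b k) (hcpos : ∀ k, 0 < c k)
    (x xt z : ℕ → H) (hz0 : z 0 = x 0)
    (hxt : ∀ k : ℕ, xt (k+1) = (1 / (b k + 1)) • z k + (b k / (b k + 1)) • x k)
    (hxmin : ∀ k : ℕ, IsMinOn
      (fun y => f y + ((b k + 1) / (2 * c k)) * ‖y - xt (k+1)‖^2)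
      Set.univ (x (k+1)))
    (hzk1 : ∀ k : ℕ,
      z (k+1) = z k + ((a k * (b k + 1)) / c k) • (x (k+1) - xt (k+1)))
    (hca : ∀ k : ℕ, c k ≥ a k / 2)
    (d : ℝ) (hd0 : 0 < d) (hd1 : d < 1)
    (hAmono : ∀ k : ℕ, 0 ≤ a (k+1) * b (k+1) - a k * b k)
    (hAle : ∀ k : ℕ, a (k+1) * b (k+1) - a k * b k ≤ d * a k)
    (γ : ℝ) (hγ : 0 < γ)
    (haA : ∀ k : ℕ, a k ≥ γ * (a k * b k)) :
    Filter.Tendsto (fun k : ℕ => a k * b k * (f (x k) - f xs))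
      Filter.atTop (nhds 0) :=
  sppa_stmt7_general f hconv xs hmin a b c hapos hbpos x xt z hxt hxmin hzk1 hca d hd1 hAle γ hγ haA
end

section
/- Let a ≥ 1 and (q_k) be a bounded sequence in a real Hilbert space such that q_k + (k/a)(q_{k+1} − q_k) → l as k → ∞. Then q_k → l. -/
open Filter Topology

/-- If `a ≥ 1` and `(q_k)` is a bounded sequence in a real Hilbert
space with `q_k + (k/a)(q_{k+1} - q_k) → l`, then `q_k → l`. -/
theorem sppa_stmt14
    {H : Type*} [NormedAddCommGroup H] [InnerProductSpace ℝ H] [CompleteSpace H]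
    (a : ℝ) (ha : 1 ≤ a) (q : ℕ → H) (l : H)
    (hbdd : ∃ C : ℝ, ∀ k, ‖q k‖ ≤ C)
    (hlim : Filter.Tendsto (fun k : ℕ => q k + ((k : ℝ) / a) • (q (k+1) - q k))
      Filter.atTop (nhds l)) :
    Filter.Tendsto q Filter.atTop (nhds l) := by
  have ha0 : (0:ℝ) < a := lt_of_lt_of_le one_pos ha
  set r : ℕ → H := fun k => q k + ((k : ℝ) / a) • (q (k+1) - q k) with hr
  set u : ℕ → ℝ := fun k => ‖q k - l‖ with hu
  set e : ℕ → ℝ := fun k => ‖r k - l‖ with he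
  have hε : Tendsto e atTop (nhds 0) := by
    rw [tendsto_iff_norm_sub_tendsto_zero] at hlim
    exact hlim
  -- key recursion
  have key : ∀ k : ℕ, a ≤ (k:ℝ) → u (k+1) ≤ (1 - a/k) * u k + (a/k) * e k := by
    intro k hk
    have hkpos : (0:ℝ) < k := lt_of_lt_of_le ha0 hk
    have hk0 : (k:ℝ) ≠ 0 := ne_of_gt hkpos
    have h2 : (a/(k:ℝ)) • (r k - q k) = q (k+1) - q k := by
      have : r k - q k = ((k:ℝ)/a) • (q (k+1) - q k) := by simp [hr]
      rw [this, smul_smul]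
      have hone : a/(k:ℝ) * ((k:ℝ)/a) = 1 := by field_simp
      rw [hone, one_smul]
    have hid : q (k+1) - l = (1 - a/k) • (q k - l) + (a/k) • (r k - l) := by
      have step : q (k+1) - l = (q k - l) + (a/(k:ℝ)) • (r k - q k) := by
        rw [h2]; abel
      rw [step]
      module
    calc u (k+1) = ‖q (k+1) - l‖ := rfl
      _ = ‖(1 - a/k) • (q k - l) + (a/k) • (r k - l)‖ := by rw [hid]
      _ ≤ ‖(1 - a/k) • (q k - l)‖ + ‖(a/k) • (r k - l)‖ := norm_add_le _ _
      _ = |1 - a/k| * u k + |a/k| * e k := by rw [norm_smul, norm_smul]; rfl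
      _ = (1 - a/k) * u k + (a/k) * e k := by
          rw [abs_of_nonneg
            (by rw [sub_nonneg]; exact div_le_one_of_le₀ hk hkpos.le),
            abs_of_nonneg (by positivity)]
  -- main ε argument
  rw [Metric.tendsto_atTop]
  intro ε hε0
  have hε2 : 0 < ε/2 := by positivity
  obtain ⟨K₁, hK₁⟩ := Metric.tendsto_atTop.mp hε (ε/2) hε2
  set K : ℕ := max (max K₁ 2) ⌈a⌉₊ + 1 with hK
  have hKa : a ≤ (K:ℝ) := by
    calc a ≤ (⌈a⌉₊ : ℝ) := Nat.le_ceil a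
      _ ≤ (K:ℝ) := by exact_mod_cast Nat.le_succ_of_le (le_max_right _ _)
  have hK2 : 2 ≤ K := le_trans (le_max_right _ 2) (Nat.le_succ_of_le (le_max_left _ _))
  have hKK₁ : K₁ ≤ K := le_trans (le_max_left _ 2) (Nat.le_succ_of_le (le_max_left _ _))
  set v : ℕ → ℝ := fun k => max (u k - ε/2) 0 with hv
  have hv0 : ∀ k, 0 ≤ v k := fun k => le_max_right _ _
  have hvu : ∀ k, u k - ε/2 ≤ v k := fun k => le_max_left _ _
  have hstep : ∀ k, K ≤ k → (k:ℝ) * v (k+1) ≤ ((k:ℝ) - 1) * v k := by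
    intro k hkK
    have hka : a ≤ (k:ℝ) := le_trans hKa (by exact_mod_cast hkK)
    have hkpos : (0:ℝ) < k := lt_of_lt_of_le ha0 hka
    have hk1 : (1:ℝ) ≤ k := le_trans ha hka
    have hek : e k ≤ ε/2 := by
      have h := hK₁ k (le_trans hKK₁ hkK)
      rw [Real.dist_eq, sub_zero] at h
      exact le_of_lt (lt_of_le_of_lt (le_abs_self _) h)
    have h1 : u (k+1) ≤ (1 - a/k) * u k + (a/k) * (ε/2) := by
      refine le_trans (key k hka) ?_
      have : (a/(k:ℝ)) * e k ≤ (a/(k:ℝ)) * (ε/2) :=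
        mul_le_mul_of_nonneg_left hek (by positivity)
      linarith
    have hcoef : (0:ℝ) ≤ 1 - a/k := by
      rw [sub_nonneg]; exact div_le_one_of_le₀ hka hkpos.le
    have h2 : u (k+1) - ε/2 ≤ (1 - a/k) * v k := by
      have hh : u (k+1) - ε/2 ≤ (1 - a/k) * (u k - ε/2) := by ring_nf; ring_nf at h1; linarith
      exact le_trans hh (mul_le_mul_of_nonneg_left (hvu k) hcoef)
    have h4 : 1/(k:ℝ) ≤ a/k := by gcongr
    have h3 : (1 - a/k) * v k ≤ (1 - 1/k) * v k :=
      mul_le_mul_of_nonneg_right (by linarith) (hv0 k)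
    have hcoef2 : (0:ℝ) ≤ 1 - 1/k := by
      rw [sub_nonneg]; exact div_le_one_of_le₀ hk1 hkpos.le
    have h5 : v (k+1) ≤ (1 - 1/k) * v k := by
      apply max_le (le_trans h2 h3)
      exact mul_nonneg hcoef2 (hv0 k)
    calc (k:ℝ) * v (k+1) ≤ (k:ℝ) * ((1 - 1/k) * v k) :=
          mul_le_mul_of_nonneg_left h5 hkpos.le
      _ = ((k:ℝ) - 1) * v k := by field_simp
  have hmono : ∀ k, K ≤ k → ((k:ℝ) - 1) * v k ≤ ((K:ℝ) - 1) * v K := by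
    intro k hkK
    induction k, hkK using Nat.le_induction with
    | base => exact le_refl _
    | succ n hn ih =>
        calc (((n+1:ℕ):ℝ) - 1) * v (n+1) = (n:ℝ) * v (n+1) := by push_cast; ring
          _ ≤ ((n:ℝ) - 1) * v n := hstep n hn
          _ ≤ ((K:ℝ) - 1) * v K := ih
  set C : ℝ := ((K:ℝ) - 1) * v K with hC
  have hvbound : ∀ k, K ≤ k → v k ≤ C / ((k:ℝ) - 1) := by
    intro k hkK
    have hk2 : (2:ℝ) ≤ k := by exact_mod_cast le_trans hK2 hkK
    have hpos : (0:ℝ) < (k:ℝ) - 1 := by linarith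
    rw [le_div_iff₀ hpos]
    have := hmono k hkK
    linarith [mul_comm (v k) ((k:ℝ)-1)]
  have htend : Tendsto (fun k : ℕ => C / ((k:ℝ) - 1)) atTop (nhds 0) := by
    apply Tendsto.div_atTop tendsto_const_nhds
    exact tendsto_atTop_add_const_right atTop (-1) tendsto_natCast_atTop_atTop
  have hev : ∀ᶠ k : ℕ in atTop, C / ((k:ℝ) - 1) < ε/2 := htend.eventually (gt_mem_nhds hε2)
  obtain ⟨N, hN⟩ := eventually_atTop.mp hev
  refine ⟨max N K, fun k hk => ?_⟩
  have hkN : N ≤ k := le_trans (le_max_left _ _) hk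
  have hkK : K ≤ k := le_trans (le_max_right _ _) hk
  have hlt : v k < ε/2 := lt_of_le_of_lt (hvbound k hkK) (hN k hkN)
  have huv : u k - ε/2 ≤ v k := hvu k
  calc dist (q k) l = u k := by rw [dist_eq_norm]
    _ < ε := by linarith
end

section
/- Let a > 0 and q : [t₀, ∞) → H be continuously differentiable such that q(t) + (t/a)q'(t) → l as t → ∞. Then q(t) → l. -/
open Filter Topology Set

/-- If `a > 0` and `q : [t₀,∞) → H` is continuously differentiable
with `q(t) + (t/a) q'(t) → l` as `t → ∞`, then `q(t) → l`. -/
theorem sppa_stmt15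
    {H : Type*} [NormedAddCommGroup H] [InnerProductSpace ℝ H] [CompleteSpace H]
    (a t₀ : ℝ) (ha : 0 < a) (ht₀ : 0 < t₀)
    (q q' : ℝ → H)
    (hq : ∀ t ∈ Set.Ici t₀, HasDerivAt q (q' t) t)
    (hq' : ContinuousOn q' (Set.Ici t₀))
    (l : H)
    (hlim : Filter.Tendsto (fun t : ℝ => q t + (t / a) • q' t)
      Filter.atTop (nhds l)) :
    Filter.Tendsto q Filter.atTop (nhds l) := by
  set w : ℝ → ℝ := fun u => a * u ^ (a - 1) with hw
  set G : ℝ → H := fun u => (q u + (u / a) • q' u) - l with hGdef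
  have hG0 : Tendsto G atTop (nhds 0) := tendsto_sub_nhds_zero_iff.mpr hlim
  have hqc : ContinuousOn q (Ici t₀) := fun t ht => ((hq t ht).continuousAt).continuousWithinAt
  have hGc : ContinuousOn G (Ici t₀) := by
    apply ContinuousOn.sub _ continuousOn_const
    exact hqc.add (((continuousOn_id.div_const a)).smul hq')
  have hwc : ContinuousOn w (Ici t₀) := by
    apply continuousOn_const.mul
    intro x hx
    exact (Real.continuousAt_rpow_const x (a - 1)
      (Or.inl (lt_of_lt_of_le ht₀ hx).ne')).continuousWithinAt
  have hwnn : ∀ u ∈ Ici t₀, 0 ≤ w u := by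
    intro u hu
    have hu0 : (0:ℝ) < u := lt_of_lt_of_le ht₀ hu
    positivity
  -- derivative of u ↦ u^a • (q u - l)
  have hP : ∀ s ∈ Ici t₀, HasDerivAt (fun u : ℝ => u ^ a • (q u - l)) (w s • G s) s := by
    intro s hs
    have hs0 : (0:ℝ) < s := lt_of_lt_of_le ht₀ hs
    have h1 : HasDerivAt (fun u : ℝ => u ^ a) (a * s ^ (a - 1)) s :=
      Real.hasDerivAt_rpow_const (Or.inl hs0.ne')
    have h2 : HasDerivAt (fun u => q u - l) (q' s) s := (hq s hs).sub_const l
    have h3 := h1.smul h2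
    have hsa : a * s ^ (a - 1) * (s / a) = s ^ a := by
      rw [Real.rpow_sub hs0, Real.rpow_one]
      field_simp
    have heq : w s • G s = s ^ a • q' s + (a * s ^ (a - 1)) • (q s - l) := by
      simp only [hGdef, hw]
      rw [show (q s + (s / a) • q' s) - l = (q s - l) + (s / a) • q' s by abel]
      rw [smul_add, smul_smul, hsa]
      abel
    rw [heq]
    exact h3
  -- derivative of u ↦ u^a
  have hW : ∀ s ∈ Ici t₀, HasDerivAt (fun u : ℝ => u ^ a) (w s) s := by
    intro s hs
    exact Real.hasDerivAt_rpow_const (Or.inl (lt_of_lt_of_le ht₀ hs).ne')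
  -- integrability
  have hsub : ∀ s t : ℝ, t₀ ≤ s → s ≤ t → uIcc s t ⊆ Ici t₀ := by
    intro s t hs hst
    rw [uIcc_of_le hst]
    exact fun x hx => le_trans hs hx.1
  have hintG : ∀ s t : ℝ, t₀ ≤ s → s ≤ t →
      IntervalIntegrable (fun u => w u • G u) MeasureTheory.volume s t := by
    intro s t hs hst
    exact ((hwc.smul hGc).mono (hsub s t hs hst)).intervalIntegrable
  have hintN : ∀ s t : ℝ, t₀ ≤ s → s ≤ t →
      IntervalIntegrable (fun u => w u * ‖G u‖) MeasureTheory.volume s t := by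
    intro s t hs hst
    exact ((hwc.mul hGc.norm).mono (hsub s t hs hst)).intervalIntegrable
  have hintW : ∀ s t : ℝ, t₀ ≤ s → s ≤ t →
      IntervalIntegrable w MeasureTheory.volume s t := by
    intro s t hs hst
    exact (hwc.mono (hsub s t hs hst)).intervalIntegrable
  -- FTC facts
  have keyW : ∀ s t : ℝ, t₀ ≤ s → s ≤ t → (∫ u in s..t, w u) = t ^ a - s ^ a := by
    intro s t hs hst
    exact intervalIntegral.integral_eq_sub_of_hasDerivAt
      (fun x hx => hW x (hsub s t hs hst hx)) (hintW s t hs hst)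
  have key : ∀ t : ℝ, t₀ ≤ t →
      t ^ a • (q t - l) = t₀ ^ a • (q t₀ - l) + ∫ u in t₀..t, w u • G u := by
    intro t ht
    have := intervalIntegral.integral_eq_sub_of_hasDerivAt
      (f := fun u : ℝ => u ^ a • (q u - l)) (f' := fun u => w u • G u)
      (fun x hx => hP x (hsub t₀ t le_rfl ht hx)) (hintG t₀ t le_rfl ht)
    rw [this]; abel
  -- norm identity for the integrand
  have hnorm : ∀ s t : ℝ, t₀ ≤ s → s ≤ t →
      (∫ u in s..t, ‖w u • G u‖) = ∫ u in s..t, w u * ‖G u‖ := by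
    intro s t hs hst
    apply intervalIntegral.integral_congr
    intro x hx
    have := hwnn x (hsub s t hs hst hx)
    simp [norm_smul, abs_of_nonneg this]
  -- main limit
  rw [← tendsto_sub_nhds_zero_iff]
  rw [NormedAddCommGroup.tendsto_nhds_zero]
  intro ε hε
  obtain ⟨T₁, hT₁⟩ := Filter.eventually_atTop.mp
    ((NormedAddCommGroup.tendsto_nhds_zero.mp hG0) (ε / 4) (by positivity))
  set T : ℝ := max T₁ t₀ with hT
  have hTt₀ : t₀ ≤ T := le_max_right _ _
  have hGsmall : ∀ u, T ≤ u → ‖G u‖ ≤ ε / 4 := fun u hu =>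
    le_of_lt (hT₁ u (le_trans (le_max_left _ _) hu))
  set C : ℝ := ‖t₀ ^ a • (q t₀ - l)‖ + ∫ u in t₀..T, w u * ‖G u‖ with hC
  -- main bound for t ≥ T
  have hbound : ∀ t : ℝ, T ≤ t → ‖q t - l‖ ≤ (t ^ a)⁻¹ * C + ε / 4 := by
    intro t htT
    have ht : t₀ ≤ t := le_trans hTt₀ htT
    have ht0 : (0:ℝ) < t := lt_of_lt_of_le ht₀ ht
    have hta : (0:ℝ) < t ^ a := Real.rpow_pos_of_pos ht0 a
    have hqt : q t - l = (t ^ a)⁻¹ • (t₀ ^ a • (q t₀ - l) + ∫ u in t₀..t, w u • G u) := by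
      rw [← key t ht, smul_smul, inv_mul_cancel₀ hta.ne', one_smul]
    have hsplit : (∫ u in t₀..t, w u * ‖G u‖)
        = (∫ u in t₀..T, w u * ‖G u‖) + ∫ u in T..t, w u * ‖G u‖ :=
      (intervalIntegral.integral_add_adjacent_intervals
        (hintN t₀ T le_rfl hTt₀) (hintN T t hTt₀ htT)).symm
    have htail : (∫ u in T..t, w u * ‖G u‖) ≤ (ε / 4) * (t ^ a - T ^ a) := by
      have h1 : (∫ u in T..t, w u * ‖G u‖) ≤ ∫ u in T..t, w u * (ε / 4) := by
        apply intervalIntegral.integral_mono_on htT (hintN T t hTt₀ htT)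
          (((hwc.mono (hsub T t hTt₀ htT)).mul continuousOn_const).intervalIntegrable)
        · intro x hx
          have hx' : x ∈ uIcc T t := by rwa [uIcc_of_le htT]
          exact mul_le_mul_of_nonneg_left (hGsmall x hx.1) (hwnn x (hsub T t hTt₀ htT hx'))
      calc (∫ u in T..t, w u * ‖G u‖) ≤ ∫ u in T..t, w u * (ε / 4) := h1
        _ = (ε / 4) * (t ^ a - T ^ a) := by
            rw [intervalIntegral.integral_mul_const, keyW T t hTt₀ htT]; ring
    have hTa : (0:ℝ) ≤ T ^ a := (Real.rpow_pos_of_pos (lt_of_lt_of_le ht₀ hTt₀) a).le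
    have hnormint : ‖∫ u in t₀..t, w u • G u‖ ≤ (∫ u in t₀..T, w u * ‖G u‖) + (ε / 4) * t ^ a := by
      calc ‖∫ u in t₀..t, w u • G u‖ ≤ ∫ u in t₀..t, ‖w u • G u‖ :=
            intervalIntegral.norm_integral_le_integral_norm ht
        _ = ∫ u in t₀..t, w u * ‖G u‖ := hnorm t₀ t le_rfl ht
        _ = (∫ u in t₀..T, w u * ‖G u‖) + ∫ u in T..t, w u * ‖G u‖ := hsplit
        _ ≤ (∫ u in t₀..T, w u * ‖G u‖) + (ε / 4) * (t ^ a - T ^ a) := by linarith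
        _ ≤ (∫ u in t₀..T, w u * ‖G u‖) + (ε / 4) * t ^ a := by nlinarith
    calc ‖q t - l‖ = (t ^ a)⁻¹ * ‖t₀ ^ a • (q t₀ - l) + ∫ u in t₀..t, w u • G u‖ := by
          rw [hqt, norm_smul, Real.norm_eq_abs, abs_of_pos (inv_pos.mpr hta)]
      _ ≤ (t ^ a)⁻¹ * (‖t₀ ^ a • (q t₀ - l)‖ + ‖∫ u in t₀..t, w u • G u‖) := by
          apply mul_le_mul_of_nonneg_left (norm_add_le _ _) (inv_pos.mpr hta).le
      _ ≤ (t ^ a)⁻¹ * (C + (ε / 4) * t ^ a) := by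
          apply mul_le_mul_of_nonneg_left _ (inv_pos.mpr hta).le
          rw [hC]; linarith
      _ = (t ^ a)⁻¹ * C + ε / 4 := by
          rw [mul_add, mul_comm (ε / 4) (t ^ a), ← mul_assoc,
            inv_mul_cancel₀ hta.ne', one_mul]
  -- conclude
  have hinv : Tendsto (fun t : ℝ => (t ^ a)⁻¹ * C) atTop (nhds 0) := by
    have := (tendsto_rpow_atTop ha).inv_tendsto_atTop
    simpa using this.mul_const C
  have hev : ∀ᶠ t : ℝ in atTop, (t ^ a)⁻¹ * C < ε / 2 := by
    have := hinv.eventually (eventually_lt_nhds (show (0:ℝ) < ε / 2 by positivity))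
    simpa using this
  filter_upwards [hev, Filter.eventually_ge_atTop T] with t h1 h2
  calc ‖q t - l‖ ≤ (t ^ a)⁻¹ * C + ε / 4 := hbound t h2
    _ < ε / 2 + ε / 4 := by linarith
    _ < ε := by linarith
end

section
/- Let ρ_i > 0 be a positive sequence and define the standard proximal point iterates x_{k+1} = argmin_x { f(x) + (1/(2ρ_k))‖x − x_k‖² } for a proper closed convex f with nonempty minimizer set Ω. Then f(x_k) − f* ≤ dist(x₀, Ω)²/(2 ∑_{i=0}^{k-1} ρ_i). -/
/-!
Optimality of the proximal step along the segment towards an arbitrary `y` gives, by convexity,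
`ρₖ (f xₖ₊₁ - f y) ≤ ⟪xₖ - xₖ₊₁, xₖ₊₁ - y⟫`. Taking `y = xₖ` shows that `f` decreases along the
iterates; taking `y = w` and writing the inner product through the three-point identity makes the
sum over `i < k` telescope to at most `‖x₀ - w‖² / 2`. Monotonicity bounds the left-hand side below by
`(∑ ρᵢ) (f xₖ - f w)`, and minimizing over `w ∈ Ω` gives the rate.
-/

open Filter Topology Finset
open scoped InnerProductSpace

theorem le_of_forall_Ioc_le_add_mul {a b c : ℝ} (h : ∀ t ∈ Set.Ioc (0 : ℝ) 1, a ≤ b + t * c) :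
    a ≤ b := by
  have hlim : Tendsto (fun t : ℝ => b + t * c) (𝓝[>] 0) (𝓝 b) := by
    have : Tendsto (fun t : ℝ => b + t * c) (𝓝 0) (𝓝 (b + 0 * c)) :=
      tendsto_const_nhds.add (tendsto_id.mul_const c)
    simpa using this.mono_left nhdsWithin_le_nhds
  refine ge_of_tendsto hlim ?_
  filter_upwards [Ioc_mem_nhdsGT one_pos] with t ht using h t ht

theorem Metric.le_infDist_sq {α : Type*} [PseudoMetricSpace α] {s : Set α} {x : α} {a : ℝ}
    (hs : s.Nonempty) (h : ∀ w ∈ s, a ≤ dist x w ^ 2) : a ≤ Metric.infDist x s ^ 2 := by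
  have hsqrt : √a ≤ Metric.infDist x s :=
    (Metric.le_infDist hs).2 fun w hw => Real.sqrt_le_left dist_nonneg |>.2 (h w hw)
  exact (Real.sqrt_le_left (Metric.infDist_nonneg)).1 hsqrt

section Proximal

variable {H : Type*} [NormedAddCommGroup H] [InnerProductSpace ℝ H]

theorem ConvexOn.mul_sub_le_inner_of_isMinOn_prox {s : Set H} {f : H → ℝ} (hf : ConvexOn ℝ s f)
    {ρ : ℝ} (hρ : 0 < ρ) {u p y : H} (hp : p ∈ s) (hy : y ∈ s)
    (hmin : IsMinOn (fun z => f z + (1 / (2 * ρ)) * ‖z - u‖ ^ 2) s p) :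
    ρ * (f p - f y) ≤ ⟪u - p, p - y⟫_ℝ := by
  set I := ⟪u - p, p - y⟫_ℝ
  set c := ‖y - p‖ ^ 2
  refine le_of_forall_Ioc_le_add_mul (c := c / 2) fun t ⟨ht0, ht1⟩ => ?_
  have hz : (1 - t) • p + t • y ∈ s := hf.1 hp hy (by linarith) ht0.le (by ring)
  have hfz : f ((1 - t) • p + t • y) ≤ (1 - t) * f p + t * f y :=
    hf.2 hp hy (by linarith) ht0.le (by ring)
  have hnorm : ‖(1 - t) • p + t • y - u‖ ^ 2 = ‖p - u‖ ^ 2 + 2 * t * I + t ^ 2 * c := by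
    have hI : ⟪p - u, y - p⟫_ℝ = I := by rw [← inner_neg_neg, neg_sub, neg_sub]
    rw [show (1 - t) • p + t • y - u = (p - u) + t • (y - p) by module, norm_add_sq_real,
      real_inner_smul_right, norm_smul, hI, Real.norm_of_nonneg ht0.le]
    ring
  have hopt := hmin hz
  simp only [Set.mem_ofPred_eq, hnorm] at hopt
  have hstep : t * (f p - f y) ≤ 1 / (2 * ρ) * (2 * t * I + t ^ 2 * c) := by linarith
  have hρinv : ρ * (1 / (2 * ρ)) = 1 / 2 := by field_simp
  have hscaled : t * (ρ * (f p - f y)) ≤ t * (I + t * (c / 2)) := by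
    linear_combination ρ * hstep + (2 * t * I + t ^ 2 * c) * hρinv
  exact le_of_mul_le_mul_left hscaled ht0

def IsProximalSeq (f : H → ℝ) (ρ : ℕ → ℝ) (x : ℕ → H) : Prop :=
  ∀ k, IsMinOn (fun y => f y + (1 / (2 * ρ k)) * ‖y - x k‖ ^ 2) Set.univ (x (k + 1))

namespace IsProximalSeq

variable {f : H → ℝ} {ρ : ℕ → ℝ} {x : ℕ → H}

theorem mul_sub_le_inner (hx : IsProximalSeq f ρ x) (hf : ConvexOn ℝ Set.univ f)
    (hρ : ∀ k, 0 < ρ k) (k : ℕ) (y : H) :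
    ρ k * (f (x (k + 1)) - f y) ≤ ⟪x k - x (k + 1), x (k + 1) - y⟫_ℝ :=
  hf.mul_sub_le_inner_of_isMinOn_prox (hρ k) (Set.mem_univ _) (Set.mem_univ _) (hx k)

theorem antitone (hx : IsProximalSeq f ρ x) (hf : ConvexOn ℝ Set.univ f) (hρ : ∀ k, 0 < ρ k) :
    Antitone (f ∘ x) := by
  refine antitone_nat_of_succ_le fun k => ?_
  have h := hx.mul_sub_le_inner hf hρ k (x k)
  rw [← neg_sub (x k), inner_neg_right, real_inner_self_eq_norm_sq] at h
  simp only [Function.comp_apply]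
  nlinarith [hρ k, sq_nonneg ‖x k - x (k + 1)‖]

theorem sum_mul_sub_le (hx : IsProximalSeq f ρ x) (hf : ConvexOn ℝ Set.univ f)
    (hρ : ∀ k, 0 < ρ k) (w : H) (n : ℕ) :
    ∑ i ∈ range n, ρ i * (f (x (i + 1)) - f w) ≤ (‖x 0 - w‖ ^ 2 - ‖x n - w‖ ^ 2) / 2 := by
  induction n with
  | zero => simp
  | succ n ih =>
    have hthree : 2 * ⟪x n - x (n + 1), x (n + 1) - w⟫_ℝ =
        ‖x n - w‖ ^ 2 - ‖x n - x (n + 1)‖ ^ 2 - ‖x (n + 1) - w‖ ^ 2 := by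
      rw [← sub_add_sub_cancel (x n) (x (n + 1)) w, norm_add_sq_real]
      ring
    rw [sum_range_succ]
    nlinarith [hx.mul_sub_le_inner hf hρ n w, sq_nonneg ‖x n - x (n + 1)‖]

theorem sum_mul_sub_le_norm_sq (hx : IsProximalSeq f ρ x) (hf : ConvexOn ℝ Set.univ f)
    (hρ : ∀ k, 0 < ρ k) (w : H) (k : ℕ) :
    2 * (∑ i ∈ range k, ρ i) * (f (x k) - f w) ≤ ‖x 0 - w‖ ^ 2 := by
  have hmono : (∑ i ∈ range k, ρ i) * (f (x k) - f w) ≤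
      ∑ i ∈ range k, ρ i * (f (x (i + 1)) - f w) := by
    rw [sum_mul]
    refine sum_le_sum fun i hi => mul_le_mul_of_nonneg_left ?_ (hρ i).le
    have := hx.antitone hf hρ (Nat.succ_le_of_lt (mem_range.1 hi))
    simp only [Function.comp_apply] at this
    linarith
  linarith [hx.sum_mul_sub_le hf hρ w k, sq_nonneg ‖x k - w‖]

end IsProximalSeq

end Proximal

theorem sppa_stmt19_general
    {H : Type*} [NormedAddCommGroup H] [InnerProductSpace ℝ H]
    (f : H → ℝ)
    (hconv : ConvexOn ℝ Set.univ f)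
    (Ω : Set H) (hΩ : Ω = {y : H | ∀ w, f y ≤ f w})
    (xs : H) (hxs : xs ∈ Ω)
    (ρ : ℕ → ℝ) (hρ : ∀ k, 0 < ρ k)
    (x : ℕ → H)
    (hxmin : ∀ k : ℕ, IsMinOn
      (fun y => f y + (1 / (2 * ρ k)) * ‖y - x k‖^2) Set.univ (x (k+1))) :
    ∀ k ≥ 1, f (x k) - f xs ≤
      (Metric.infDist (x 0) Ω)^2 / (2 * ∑ i ∈ Finset.range k, ρ i) := by
  intro k hk
  have hx : IsProximalSeq f ρ x := hxmin
  have hS : 0 < ∑ i ∈ range k, ρ i := sum_pos (fun i _ => hρ i) (nonempty_range_iff.2 (by omega))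
  have hbound : ∀ w ∈ Ω, 2 * (∑ i ∈ range k, ρ i) * (f (x k) - f xs) ≤ dist (x 0) w ^ 2 := by
    intro w hw
    rw [hΩ] at hw
    rw [dist_eq_norm]
    nlinarith [hx.sum_mul_sub_le_norm_sq hconv hρ w k, hw xs]
  rw [le_div_iff₀ (by positivity), mul_comm]
  exact Metric.le_infDist_sq ⟨xs, hxs⟩ hbound

/-- Güler's rate for the standard proximal point algorithm:
`f(x_k) - f* ≤ dist(x₀, Ω)² / (2 ∑_{i<k} ρ_i)` for all `k ≥ 1`. -/
theorem sppa_stmt19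
    {H : Type*} [NormedAddCommGroup H] [InnerProductSpace ℝ H] [CompleteSpace H]
    (f : H → ℝ)
    (hconv : ConvexOn ℝ Set.univ f) (hlsc : LowerSemicontinuous f)
    (Ω : Set H) (hΩ : Ω = {y : H | ∀ w, f y ≤ f w}) (hΩne : Ω.Nonempty)
    (xs : H) (hxs : xs ∈ Ω)
    (ρ : ℕ → ℝ) (hρ : ∀ k, 0 < ρ k)
    (x : ℕ → H)
    (hxmin : ∀ k : ℕ, IsMinOn
      (fun y => f y + (1 / (2 * ρ k)) * ‖y - x k‖^2) Set.univ (x (k+1))) :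
    ∀ k ≥ 1, f (x k) - f xs ≤
      (Metric.infDist (x 0) Ω)^2 / (2 * ∑ i ∈ Finset.range k, ρ i) :=
  sppa_stmt19_general f hconv Ω hΩ xs hxs ρ hρ x hxmin
end
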